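/- arXiv:0812.3056 — 2 statements merged into one kernel-verified Lean document; each statement's English description precedes it below -/
import Mathlib

section
/- Take K = ℂ(q), the field of rational functions over ℂ, with q the indeterminate. For every n ≥ 1 and every degree d ≥ 0, the dimension over ℂ(q) of the space of homogeneous degree-d q-harmonic polynomials in K[x_1,…,x_n] is at most the dimension over ℂ of the space of homogeneous degree-d classical-harmonic polynomials in ℂ[x_1,…,x_n]. -/
open MvPolynomial

/-- The `q`-Steenrod operator `P_k` on `K[x_1,…,x_n]`:
`P_k(p) = ∑ i, x_i^k • (p + q • x_i • ∂p/∂x_i)`. -/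
noncomputable def steenrodP (K : Type) [Field K] (q : K) (n k : ℕ) :
    Module.End K (MvPolynomial (Fin n) K) :=
  ∑ i : Fin n, (LinearMap.mulLeft K (X i ^ k : MvPolynomial (Fin n) K)) ∘ₗ
    (LinearMap.id + q • ((LinearMap.mulLeft K (X i : MvPolynomial (Fin n) K)) ∘ₗ
      (pderiv i).toLinearMap))

/-- The dual `q`-Steenrod operator `P_k^*` on `K[x_1,…,x_n]`:
`P_k^*(p) = ∑ i, (∂^k p/∂x_i^k + q • x_i • ∂^{k+1} p/∂x_i^{k+1})`. -/
noncomputable def steenrodPdual (K : Type) [Field K] (q : K) (n k : ℕ) :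
    Module.End K (MvPolynomial (Fin n) K) :=
  ∑ i : Fin n,
    ((((pderiv i).toLinearMap : Module.End K (MvPolynomial (Fin n) K)) ^ k)
      + q • ((LinearMap.mulLeft K (X i : MvPolynomial (Fin n) K)) ∘ₗ
          ((((pderiv i).toLinearMap : Module.End K (MvPolynomial (Fin n) K)) ^ (k+1) : Module.End K (MvPolynomial (Fin n) K)) : MvPolynomial (Fin n) K →ₗ[K] MvPolynomial (Fin n) K)))

/-- The bilinear form `B(p,r) = ∑_m m! ⬝ p_m ⬝ r_m` over exponent vectors `m`. -/
noncomputable def formB {K : Type} [Field K] {n : ℕ} (p r : MvPolynomial (Fin n) K) : K :=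
  ∑ m ∈ p.support, (∏ i, ((m i).factorial : K)) * p.coeff m * r.coeff m

/-- `p` is `q`-harmonic if it is killed by all the dual `q`-Steenrod operators. -/
def IsQHarmonic {K : Type} [Field K] {n : ℕ} (q : K) (p : MvPolynomial (Fin n) K) : Prop :=
  ∀ k : ℕ, 1 ≤ k → steenrodPdual K q n k p = 0

/-- The space of `q`-hit polynomials: the span of the ranges of the `P_k`, `k ≥ 1`. -/
noncomputable def qHit (K : Type) [Field K] (q : K) (n : ℕ) :
    Submodule K (MvPolynomial (Fin n) K) :=
  Submodule.span K (⋃ k ∈ {k : ℕ | 1 ≤ k}, Set.range (steenrodP K q n k))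

/-- For a list `λ = [λ_1, …, λ_m]`, the operator `P_λ = P_{λ_1} ∘ ⋯ ∘ P_{λ_m}`. -/
noncomputable def steenrodPList (K : Type) [Field K] (q : K) (n : ℕ) (l : List ℕ) :
    Module.End K (MvPolynomial (Fin n) K) :=
  (l.map (steenrodP K q n)).prod

/-- The space of homogeneous degree-`d` `q`-harmonic polynomials in `K[x_1,…,x_n]`. -/
noncomputable def qHarmonicHomogeneous (K : Type) [Field K] (q : K) (n d : ℕ) :
    Submodule K (MvPolynomial (Fin n) K) :=
  homogeneousSubmodule (Fin n) K d ⊓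
    ⨅ k ∈ {k : ℕ | 1 ≤ k}, LinearMap.ker (steenrodPdual K q n k)

/-! ### Auxiliary material for the proof -/

/-- The dual Steenrod operator over an arbitrary commutative ring. -/
noncomputable def Dop {R : Type*} [CommRing R] (q : R) {n : ℕ} (k : ℕ)
    (p : MvPolynomial (Fin n) R) : MvPolynomial (Fin n) R :=
  ∑ i : Fin n, ((pderiv i)^[k] p + q • (X i * ((pderiv i)^[k+1] p)))

theorem steenrodPdual_apply (K : Type) [Field K] (q : K) (n k : ℕ)
    (p : MvPolynomial (Fin n) K) :
    steenrodPdual K q n k p = Dop q k p := by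
  simp [steenrodPdual, Dop, LinearMap.sum_apply, LinearMap.add_apply, LinearMap.smul_apply,
    LinearMap.comp_apply, LinearMap.mulLeft_apply, Module.End.pow_apply]

theorem map_iterate_pderiv {R S : Type*} [CommSemiring R] [CommSemiring S] (f : R →+* S)
    {n : ℕ} (i : Fin n) (k : ℕ) (p : MvPolynomial (Fin n) R) :
    MvPolynomial.map f ((pderiv i)^[k] p) = (pderiv i)^[k] (MvPolynomial.map f p) := by
  induction k with
  | zero => simp
  | succ k ih =>
    rw [Function.iterate_succ_apply', Function.iterate_succ_apply', ← ih, pderiv_map]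

theorem Dop_map {R S : Type*} [CommRing R] [CommRing S] (f : R →+* S) (q : R) {n : ℕ}
    (k : ℕ) (p : MvPolynomial (Fin n) R) :
    MvPolynomial.map f (Dop q k p) = Dop (f q) k (MvPolynomial.map f p) := by
  simp only [Dop, map_sum, map_add, MvPolynomial.smul_eq_C_mul, map_mul, MvPolynomial.map_C,
    MvPolynomial.map_X, map_iterate_pderiv]

/-- Homogeneity descends along an injective coefficient map. -/
theorem isHomogeneous_of_map {R S : Type*} [CommSemiring R] [CommSemiring S] (f : R →+* S)
    (hf : Function.Injective f) {n d : ℕ} (p : MvPolynomial (Fin n) R)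
    (h : (MvPolynomial.map f p).IsHomogeneous d) : p.IsHomogeneous d := by
  intro m hm
  refine h (d := m) ?_
  rw [coeff_map]
  exact fun h0 => hm (hf (by rwa [map_zero]))

/-- Homogeneity is preserved by any coefficient map. -/
theorem isHomogeneous_map {R S : Type*} [CommSemiring R] [CommSemiring S] (f : R →+* S)
    {n d : ℕ} (p : MvPolynomial (Fin n) R)
    (h : p.IsHomogeneous d) : (MvPolynomial.map f p).IsHomogeneous d := by
  intro m hm
  refine h (d := m) ?_
  intro h0
  rw [coeff_map, h0, map_zero] at hm
  exact hm rfl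

instance homogeneousSubmodule_finiteDimensional (K : Type) [Field K] (n d : ℕ) :
    FiniteDimensional K (homogeneousSubmodule (Fin n) K d) := by
  apply Submodule.finiteDimensional_of_le (S₂ := restrictTotalDegree (Fin n) K d)
  intro p hp
  rw [mem_restrictTotalDegree]
  exact ((mem_homogeneousSubmodule _ _).mp hp).totalDegree_le

/-- Any finite-dimensional subspace of a polynomial ring admits a small set of coordinates
on which the coefficient projection is injective. -/
theorem exists_coords {K : Type} [Field K] {n : ℕ} (r : ℕ) :
    ∀ (H : Submodule K (MvPolynomial (Fin n) K)),
    FiniteDimensional K H → Module.finrank K H ≤ r →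
    ∃ S : Finset ((Fin n) →₀ ℕ), S.card ≤ Module.finrank K H ∧
      ∀ h ∈ H, (∀ m ∈ S, coeff m h = 0) → h = 0 := by
  induction r with
  | zero =>
    intro H hFD hr
    haveI := hFD
    refine ⟨∅, by simp, fun h hh _ => ?_⟩
    have : H = ⊥ := Submodule.finrank_eq_zero.mp (Nat.le_zero.mp hr)
    simpa [this] using hh
  | succ r ih =>
    intro H hFD hr
    haveI := hFD
    by_cases hbot : H = ⊥
    · exact ⟨∅, by simp, fun h hh _ => by simpa [hbot] using hh⟩
    · obtain ⟨h₀, hh₀, hne⟩ := Submodule.exists_mem_ne_zero_of_ne_bot hbot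
      obtain ⟨m₀, hm₀⟩ := (support_nonempty.mpr hne)
      set H' := H ⊓ LinearMap.ker (lcoeff K m₀) with hH'
      haveI : FiniteDimensional K H' := Submodule.finiteDimensional_of_le inf_le_left
      have hlt : H' < H := by
        refine lt_of_le_of_ne inf_le_left (fun he => ?_)
        have : h₀ ∈ H' := he ▸ hh₀
        rw [hH', Submodule.mem_inf, LinearMap.mem_ker, lcoeff_apply] at this
        exact (mem_support_iff.mp hm₀) this.2
      have hfr : Module.finrank K H' < Module.finrank K H :=
        Submodule.finrank_lt_finrank_of_lt hlt
      obtain ⟨S', hS'card, hS'⟩ := ih H' inferInstance (by omega)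
      refine ⟨insert m₀ S', ?_, ?_⟩
      · calc (insert m₀ S').card ≤ S'.card + 1 := Finset.card_insert_le _ _
          _ ≤ Module.finrank K H' + 1 := by omega
          _ ≤ Module.finrank K H := by omega
      · intro h hh hvan
        refine hS' h ?_ (fun m hm => hvan m (Finset.mem_insert_of_mem hm))
        rw [hH', Submodule.mem_inf, LinearMap.mem_ker, lcoeff_apply]
        exact ⟨hh, hvan m₀ (Finset.mem_insert_self _ _)⟩

/-- Clearing denominators and powers of `q` for a nonzero polynomial over `ℂ(q)`. -/
theorem exists_integral_rep {n : ℕ} (p : MvPolynomial (Fin n) (RatFunc ℂ)) (hp : p ≠ 0) :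
    ∃ (c : RatFunc ℂ) (p₂ : MvPolynomial (Fin n) (Polynomial ℂ)),
      c ≠ 0 ∧ MvPolynomial.map (algebraMap (Polynomial ℂ) (RatFunc ℂ)) p₂ = c • p ∧
      MvPolynomial.map (Polynomial.evalRingHom (0:ℂ)) p₂ ≠ 0 := by
  classical
  set φ := algebraMap (Polynomial ℂ) (RatFunc ℂ) with hφ
  have hφinj : Function.Injective φ := RatFunc.algebraMap_injective ℂ
  obtain ⟨b, hb⟩ := IsLocalization.exist_integer_multiples
    (nonZeroDivisors (Polynomial ℂ)) p.support p.coeff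
  set c₀ : RatFunc ℂ := φ (b : Polynomial ℂ) with hc₀
  have hc₀ne : c₀ ≠ 0 := by
    simp only [hc₀, map_ne_zero_iff φ hφinj]
    exact nonZeroDivisors.coe_ne_zero b
  have hbint : ∀ m ∈ p.support, ∃ a : Polynomial ℂ, φ a = c₀ * p.coeff m := by
    intro m hm
    obtain ⟨a, ha⟩ := hb m hm
    exact ⟨a, by rw [ha, Algebra.smul_def]⟩
  set g : ((Fin n) →₀ ℕ) → Polynomial ℂ :=
    fun m => if h : m ∈ p.support then (hbint m h).choose else 0 with hg
  set p₁ : MvPolynomial (Fin n) (Polynomial ℂ) :=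
    ∑ m ∈ p.support, monomial m (g m) with hp₁def
  have hp₁coeff : ∀ m, coeff m p₁ = g m := by
    intro m
    rw [hp₁def, coeff_sum]
    by_cases hm : m ∈ p.support
    · rw [Finset.sum_eq_single m (fun m' _ hne => by simp [coeff_monomial, hne])
        (fun h => absurd hm h)]
      simp [coeff_monomial]
    · rw [Finset.sum_eq_zero (fun m' hm' => by
        simp [coeff_monomial]; intro he; exact absurd (he ▸ hm') hm)]
      rw [hg]; beta_reduce; rw [dif_neg hm]
  have hmap1 : MvPolynomial.map φ p₁ = c₀ • p := by
    apply MvPolynomial.ext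
    intro m
    rw [coeff_map, hp₁coeff, coeff_smul]
    by_cases hm : m ∈ p.support
    · rw [hg]; simp only [hm, dif_pos]
      rw [(hbint m hm).choose_spec, smul_eq_mul]
    · simp [hg, hm, notMem_support_iff.mp hm]
  have hp₁ne : p₁ ≠ 0 := by
    intro h0
    apply hp
    have : c₀ • p = 0 := by rw [← hmap1, h0, map_zero]
    simpa [smul_eq_zero, hc₀ne] using this
  have hsupp : p₁.support.Nonempty := support_nonempty.mpr hp₁ne
  set t : ℕ := p₁.support.inf' hsupp
    (fun m => Polynomial.rootMultiplicity 0 (p₁.coeff m)) with ht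
  have hdvd : ∀ m, (Polynomial.X : Polynomial ℂ)^t ∣ p₁.coeff m := by
    intro m
    by_cases hm : m ∈ p₁.support
    · have h1 := Polynomial.pow_rootMultiplicity_dvd (p₁.coeff m) 0
      rw [map_zero, sub_zero] at h1
      exact dvd_trans (pow_dvd_pow _ (Finset.inf'_le _ hm)) h1
    · simp [notMem_support_iff.mp hm]
  set c' : ((Fin n) →₀ ℕ) → Polynomial ℂ := fun m => (hdvd m).choose with hc'
  have hc'spec : ∀ m, p₁.coeff m = Polynomial.X^t * c' m := fun m => (hdvd m).choose_spec
  set p₂ : MvPolynomial (Fin n) (Polynomial ℂ) :=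
    ∑ m ∈ p₁.support, monomial m (c' m) with hp₂def
  have hXt : (Polynomial.X : Polynomial ℂ)^t ≠ 0 := pow_ne_zero _ Polynomial.X_ne_zero
  have hp₂coeff : ∀ m, coeff m p₂ = c' m := by
    intro m
    rw [hp₂def, coeff_sum]
    by_cases hm : m ∈ p₁.support
    · rw [Finset.sum_eq_single m (fun m' _ hne => by simp [coeff_monomial, hne])
        (fun h => absurd hm h)]
      simp [coeff_monomial]
    · rw [Finset.sum_eq_zero (fun m' hm' => by
        simp [coeff_monomial]; intro he; exact absurd (he ▸ hm') hm)]
      have := hc'spec m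
      rw [notMem_support_iff.mp hm] at this
      exact (mul_eq_zero.mp this.symm).resolve_left hXt |>.symm
  have hp₁eq : p₁ = MvPolynomial.C (Polynomial.X^t) * p₂ := by
    apply MvPolynomial.ext
    intro m
    rw [coeff_C_mul, hp₂coeff, hc'spec]
  obtain ⟨m₀, hm₀mem, hm₀⟩ := Finset.exists_mem_eq_inf' hsupp
    (fun m => Polynomial.rootMultiplicity 0 (p₁.coeff m))
  have hcoeffne : p₁.coeff m₀ ≠ 0 := mem_support_iff.mp hm₀mem
  have hc'ne : c' m₀ ≠ 0 := by
    intro h0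
    apply hcoeffne
    rw [hc'spec m₀, h0, mul_zero]
  have hmul : Polynomial.rootMultiplicity 0 (p₁.coeff m₀) =
      t + Polynomial.rootMultiplicity 0 (c' m₀) := by
    rw [hc'spec m₀, Polynomial.rootMultiplicity_mul (by rw [← hc'spec m₀]; exact hcoeffne)]
    congr 1
    have := Polynomial.rootMultiplicity_X_sub_C_pow (0:ℂ) t
    rwa [map_zero, sub_zero] at this
  rw [← ht] at hm₀
  have hrm0 : Polynomial.rootMultiplicity 0 (c' m₀) = 0 := by omega
  have heval : Polynomial.eval 0 (c' m₀) ≠ 0 := by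
    intro h0
    exact hc'ne (Polynomial.rootMultiplicity_eq_zero_iff.mp hrm0 h0)
  have hev2ne : MvPolynomial.map (Polynomial.evalRingHom (0:ℂ)) p₂ ≠ 0 := by
    intro h0
    apply heval
    have := congrArg (coeff m₀) h0
    rwa [coeff_map, hp₂coeff, coeff_zero, Polynomial.coe_evalRingHom] at this
  refine ⟨(φ (Polynomial.X^t))⁻¹ * c₀, p₂, ?_, ?_, hev2ne⟩
  · apply mul_ne_zero _ hc₀ne
    simp only [ne_eq, inv_eq_zero, map_eq_zero_iff φ hφinj]
    exact hXt
  · have h1 : MvPolynomial.map φ p₁ = (φ (Polynomial.X^t)) • MvPolynomial.map φ p₂ := by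
      rw [hp₁eq, map_mul, MvPolynomial.map_C, smul_eq_C_mul]
    rw [hmap1] at h1
    rw [mul_smul, h1, smul_smul, inv_mul_cancel₀ (by
      simp only [ne_eq, map_eq_zero_iff φ hφinj]; exact hXt), one_smul]

/-- Specialization at `q = 0` of a  `q`-harmonic homogeneous polynomial with polynomial
coefficients is classical-harmonic homogeneous. -/
theorem spec_mem {n d : ℕ} (p₂ : MvPolynomial (Fin n) (Polynomial ℂ))
    (hmem : MvPolynomial.map (algebraMap (Polynomial ℂ) (RatFunc ℂ)) p₂ ∈
      qHarmonicHomogeneous (RatFunc ℂ) RatFunc.X n d) :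
    MvPolynomial.map (Polynomial.evalRingHom (0:ℂ)) p₂ ∈ qHarmonicHomogeneous ℂ 0 n d := by
  set φ := algebraMap (Polynomial ℂ) (RatFunc ℂ) with hφ
  have hφinj : Function.Injective φ := RatFunc.algebraMap_injective ℂ
  obtain ⟨hhom, hker⟩ := Submodule.mem_inf.mp hmem
  refine Submodule.mem_inf.mpr ⟨?_, ?_⟩
  · rw [mem_homogeneousSubmodule] at hhom ⊢
    exact isHomogeneous_map _ _ (isHomogeneous_of_map φ hφinj _ hhom)
  · rw [Submodule.mem_iInf] at hker ⊢
    intro k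
    have hk := hker k
    rw [Submodule.mem_iInf] at hk ⊢
    intro hk1
    have h0 : steenrodPdual (RatFunc ℂ) RatFunc.X n k (MvPolynomial.map φ p₂) = 0 :=
      LinearMap.mem_ker.mp (hk hk1)
    rw [steenrodPdual_apply] at h0
    have h1 : Dop (Polynomial.X) k p₂ = 0 := by
      apply MvPolynomial.map_injective φ hφinj
      rw [Dop_map, map_zero, hφ, RatFunc.algebraMap_X]
      exact h0
    rw [LinearMap.mem_ker, steenrodPdual_apply]
    have h2 := congrArg (MvPolynomial.map (Polynomial.evalRingHom (0:ℂ))) h1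
    rw [Dop_map, map_zero] at h2
    simpa using h2

/-- Over `K = ℂ(q)` with `q` the indeterminate, the dimension of the
homogeneous degree-`d` `q`-harmonics is at most the dimension of the homogeneous
degree-`d` classical harmonics (the `q = 0` case over `ℂ`). -/
theorem finrank_qHarmonic_le_finrank_harmonic (n : ℕ) (hn : 1 ≤ n) (d : ℕ) :
    Module.finrank (RatFunc ℂ) (qHarmonicHomogeneous (RatFunc ℂ) RatFunc.X n d)
      ≤ Module.finrank ℂ (qHarmonicHomogeneous ℂ 0 n d) := by
  classical
  set F := RatFunc ℂ
  set W := qHarmonicHomogeneous F RatFunc.X n d with hW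
  set H := qHarmonicHomogeneous ℂ 0 n d with hH
  haveI : FiniteDimensional ℂ H := Submodule.finiteDimensional_of_le inf_le_left
  obtain ⟨S, hScard, hSinj⟩ := exists_coords (Module.finrank ℂ H) H inferInstance le_rfl
  -- the coefficient projection on `W`
  let π : W →ₗ[F] (↥S → F) :=
    LinearMap.pi (fun m : ↥S => (lcoeff F (m : (Fin n) →₀ ℕ)) ∘ₗ W.subtype)
  have hπinj : Function.Injective π := by
    rw [← LinearMap.ker_eq_bot, Submodule.eq_bot_iff]
    rintro ⟨w, hwW⟩ hker
    have hvan : ∀ m ∈ S, coeff m w = 0 := by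
      intro m hm
      exact congrFun hker ⟨m, hm⟩
    refine Subtype.ext ?_
    show w = 0
    by_contra hw0
    obtain ⟨c, p₂, hc, hmap, hne⟩ := exists_integral_rep w hw0
    have hcw : c • w ∈ W := Submodule.smul_mem _ c hwW
    have hmem : MvPolynomial.map (algebraMap (Polynomial ℂ) (RatFunc ℂ)) p₂ ∈ W := by
      rw [hmap]; exact hcw
    have hH0 := spec_mem p₂ (by rwa [hW] at hmem)
    apply hne
    apply hSinj _ hH0
    intro m hm
    have h1 : coeff m (MvPolynomial.map (algebraMap (Polynomial ℂ) (RatFunc ℂ)) p₂) = 0 := by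
      rw [hmap, coeff_smul, hvan m hm, smul_zero]
    rw [coeff_map] at h1 ⊢
    have h2 : coeff m p₂ = 0 := RatFunc.algebraMap_injective ℂ (by rwa [map_zero])
    rw [h2, map_zero]
  calc Module.finrank F W ≤ Module.finrank F (↥S → F) :=
        LinearMap.finrank_le_finrank_of_injective hπinj
    _ = S.card := by rw [Module.finrank_pi]; exact Fintype.card_coe S
    _ ≤ Module.finrank ℂ H := hScard
end

section
/- Let q_0 ∈ ℂ and consider the q_0-harmonic polynomials in ℂ[x,y] (two variables). If q_0 is not of the form −2/d for any integer d ≥ 2, then the space of q_0-harmonic polynomials is the ℂ-linear span of 1 and x − y. If q_0 = −2/d for some integer d ≥ 2, then the space of q_0-harmonic polynomials is the ℂ-linear span of 1, x − y, and (x − y)(x + y)^{d−1}. -/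
open MvPolynomial

/-!
Write `u(a, b) = a! b! [x^a y^b] p`. The equation `P_k^* p = 0` reads
`(1 + q s) u(s + k, t) + (1 + q t) u(s, t + k) = 0` for all `s, t`, so it only links coefficients
of one total degree `m`. Taking `s = 0` expresses every `u(a, b)` with `a ≥ 1` through `u(0, m)`,
and the two equations through `u(m - 1, 1)` give `(2 + q m) u(0, m) = 0`. So for `m ≥ 2` the
degree-`m` part of a `q`-harmonic polynomial vanishes unless `q = -2/m`, and then it is a multiple
of `(x - y)(x + y)^{m-1}`, which is `q`-harmonic because `P_k^*` maps it to
`(m-1)_k (2 + q m) (x - y)(x + y)^{m-1-k}`.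
-/

section Coefficients

variable {σ R : Type*} [CommSemiring R]

theorem coeff_pderiv_iterate (i : σ) (k : ℕ) (p : MvPolynomial σ R) (m : σ →₀ ℕ) :
    coeff m ((pderiv i)^[k] p) = (m i + k).descFactorial k * coeff (m + Finsupp.single i k) p := by
  induction k generalizing p with
  | zero => simp
  | succ k ih =>
    rw [Function.iterate_succ_apply, ih, coeff_pderiv, add_assoc, ← Finsupp.single_add,
      Finsupp.add_apply, Finsupp.single_eq_same, ← add_assoc, Nat.succ_descFactorial_succ]
    push_cast
    ring

theorem coeff_X_mul_pderiv (i : σ) (p : MvPolynomial σ R) (m : σ →₀ ℕ) :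
    coeff m (X i * pderiv i p) = m i * coeff m p := by
  classical
  rw [coeff_X_mul']
  split_ifs with hi
  · have hi : 1 ≤ m i := Nat.one_le_iff_ne_zero.2 (Finsupp.mem_support_iff.1 hi)
    rw [coeff_pderiv, tsub_add_cancel_of_le (Finsupp.single_le_iff.2 hi), Finsupp.tsub_apply,
      Finsupp.single_eq_same, ← Nat.cast_add_one, Nat.sub_add_cancel hi, mul_comm]
  · rw [Finsupp.notMem_support_iff.1 hi, Nat.cast_zero, zero_mul]

theorem pderiv_iterate_X_mul_of_ne {i j : σ} (h : j ≠ i) (k : ℕ) (p : MvPolynomial σ R) :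
    (pderiv i)^[k] (X j * p) = X j * (pderiv i)^[k] p := by
  induction k generalizing p with
  | zero => rfl
  | succ k ih => simp [Function.iterate_succ_apply, pderiv_X_of_ne h, ih]

theorem coeff_single_X_mul_of_ne {i j : σ} (h : i ≠ j) (N : ℕ) (p : MvPolynomial σ R) :
    coeff (Finsupp.single j N) (X i * p) = 0 := by
  classical
  rw [coeff_X_mul', if_neg (by simp [h])]

theorem coeff_single_succ_X_mul (i : σ) (N : ℕ) (p : MvPolynomial σ R) :
    coeff (Finsupp.single i (N + 1)) (X i * p) = coeff (Finsupp.single i N) p := by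
  rw [add_comm, Finsupp.single_add, coeff_X_mul]

end Coefficients

section SteenrodDual

variable {K : Type} [Field K] {n : ℕ}

theorem steenrodPdual_apply_s18 (q : K) (k : ℕ) (p : MvPolynomial (Fin n) K) :
    steenrodPdual K q n k p = ∑ i, ((pderiv i)^[k] p + q • (X i * (pderiv i)^[k + 1] p)) := by
  simp [steenrodPdual, Module.End.pow_apply]

theorem coeff_steenrodPdual (q : K) (k : ℕ) (p : MvPolynomial (Fin n) K) (m : Fin n →₀ ℕ) :
    coeff m (steenrodPdual K q n k p) =
      ∑ i, (1 + q * m i) * (m i + k).descFactorial k * coeff (m + Finsupp.single i k) p := by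
  simp only [steenrodPdual_apply_s18, coeff_sum, coeff_add, coeff_smul, smul_eq_mul,
    Function.iterate_succ_apply', coeff_X_mul_pderiv, coeff_pderiv_iterate]
  congr 1 with i
  ring

noncomputable def qHarmonics (q : K) (n : ℕ) : Submodule K (MvPolynomial (Fin n) K) :=
  ⨅ k, ⨅ (_ : 1 ≤ k), LinearMap.ker (steenrodPdual K q n k)

theorem mem_qHarmonics {q : K} {p : MvPolynomial (Fin n) K} :
    p ∈ qHarmonics q n ↔ IsQHarmonic q p := by
  simp [qHarmonics, IsQHarmonic, Submodule.mem_iInf]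

theorem span_le_qHarmonics {q : K} {S : Set (MvPolynomial (Fin n) K)}
    (hS : ∀ g ∈ S, IsQHarmonic q g) : Submodule.span K S ≤ qHarmonics q n :=
  Submodule.span_le.2 fun g hg => mem_qHarmonics.2 (hS g hg)

theorem setOf_isQHarmonic_eq_span {q : K} {S : Set (MvPolynomial (Fin n) K)}
    (hS : ∀ g ∈ S, IsQHarmonic q g) (h : ∀ p, IsQHarmonic q p → p ∈ Submodule.span K S) :
    {p | IsQHarmonic q p} = (Submodule.span K S : Set (MvPolynomial (Fin n) K)) :=
  Set.ext fun p => ⟨h p, fun hp => mem_qHarmonics.1 (span_le_qHarmonics hS hp)⟩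

theorem isQHarmonic_one (q : K) : IsQHarmonic q (1 : MvPolynomial (Fin n) K) := by
  intro k hk
  obtain ⟨k, rfl⟩ := Nat.exists_eq_add_of_le' hk
  simp [steenrodPdual_apply_s18, Function.iterate_succ_apply]

theorem isQHarmonic_X_sub_X (q : K) (i j : Fin n) :
    IsQHarmonic q (X i - X j : MvPolynomial (Fin n) K) := by
  classical
  intro k hk
  obtain ⟨k, rfl⟩ := Nat.exists_eq_add_of_le' hk
  have hconst (l l' : Fin n) : pderiv l (pderiv l' (X i - X j : MvPolynomial (Fin n) K)) = 0 := by
    simp only [map_sub, pderiv_X, Pi.single_apply]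
    split_ifs <;> simp
  rcases k with _ | k
  · simp only [steenrodPdual_apply_s18, Function.iterate_succ_apply, Function.iterate_zero_apply,
      hconst, mul_zero, smul_zero, add_zero]
    simp [Pi.single_apply]
  · simp [steenrodPdual_apply_s18, Function.iterate_succ_apply, hconst, -map_sub]

end SteenrodDual

section HarmonicCoefficients

variable {K : Type} [CommRing K] {q : K} {u : ℕ → ℕ → K}

def IsQHarmonicCoeffs (q : K) (u : ℕ → ℕ → K) : Prop :=
  ∀ k, 1 ≤ k → ∀ s t : ℕ, (1 + q * s) * u (s + k) t + (1 + q * t) * u s (t + k) = 0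

theorem IsQHarmonicCoeffs.eq_neg_mul (hu : IsQHarmonicCoeffs q u) {a : ℕ} (ha : 1 ≤ a)
    (b : ℕ) : u a b = -(1 + q * b) * u 0 (a + b) := by
  have h := hu a ha 0 b
  rw [zero_add, add_comm b a] at h
  push_cast at h
  linear_combination h

theorem IsQHarmonicCoeffs.two_add_mul_mul_eq_zero (hu : IsQHarmonicCoeffs q u) {m : ℕ}
    (hm : 2 ≤ m) : (2 + q * m) * u 0 m = 0 := by
  obtain ⟨m, rfl⟩ := Nat.exists_eq_add_of_le' hm
  have h1 := hu.eq_neg_mul (a := m + 1) (by omega) 1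
  have h2 := hu.eq_neg_mul (a := m + 2) (by omega) 0
  have h3 := hu 1 le_rfl (m + 1) 0
  simp only [add_assoc, add_zero, zero_add, Nat.reduceAdd] at h1 h2 h3
  push_cast at h1 h2 h3 ⊢
  linear_combination h1 + (1 + q * (m + 1)) * h2 - h3

theorem IsQHarmonicCoeffs.eq_zero [IsDomain K] (hu : IsQHarmonicCoeffs q u) (h00 : u 0 0 = 0)
    (h10 : u 1 0 = 0) (hcrit : ∀ m : ℕ, 2 ≤ m → 2 + q * m = 0 → u 0 m = 0) : u = 0 := by
  have h0 : ∀ m, u 0 m = 0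
    | 0 => h00
    | 1 => by simpa [h10] using hu.eq_neg_mul le_rfl 0
    | m + 2 => by
      by_cases hc : 2 + q * (m + 2 : ℕ) = 0
      · exact hcrit _ (by omega) hc
      · exact (mul_eq_zero.1 (hu.two_add_mul_mul_eq_zero (by omega))).resolve_left hc
  funext a b
  rcases a with _ | a
  · exact h0 b
  · rw [hu.eq_neg_mul (by omega) b, h0, mul_zero, Pi.zero_apply, Pi.zero_apply]

end HarmonicCoefficients

section TwoVariables

variable {K : Type} [Field K] {q : K}

open Nat in
noncomputable def scaledCoeff (p : MvPolynomial (Fin 2) K) (a b : ℕ) : K :=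
  (a ! * b ! : ℕ) * coeff (Finsupp.single 0 a + Finsupp.single 1 b) p

open Nat in
theorem IsQHarmonic.isQHarmonicCoeffs_scaledCoeff {p : MvPolynomial (Fin 2) K}
    (hp : IsQHarmonic q p) : IsQHarmonicCoeffs q (scaledCoeff p) := by
  intro k hk s t
  have hfac (r : ℕ) : (r + k).descFactorial k * r ! = (r + k)! := by
    simpa [mul_comm] using Nat.factorial_mul_descFactorial (Nat.le_add_left k r)
  have h := congrArg ((s ! * t ! : K) * coeff (Finsupp.single 0 s + Finsupp.single 1 t) ·)
    (hp k hk)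
  set m : Fin 2 →₀ ℕ := Finsupp.single 0 s + Finsupp.single 1 t
  have hm0 : m 0 = s := by simp [m]
  have hm1 : m 1 = t := by simp [m]
  have hmk0 : m + Finsupp.single 0 k = Finsupp.single 0 (s + k) + Finsupp.single 1 t := by
    rw [add_right_comm, ← Finsupp.single_add]
  have hmk1 : m + Finsupp.single 1 k = Finsupp.single 0 s + Finsupp.single 1 (t + k) := by
    rw [add_assoc, ← Finsupp.single_add]
  simp only [coeff_steenrodPdual, Fin.sum_univ_two, coeff_zero, mul_zero, hm0, hm1, hmk0,
    hmk1] at h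
  rw [scaledCoeff, scaledCoeff, ← hfac s, ← hfac t]
  push_cast
  linear_combination h

theorem IsQHarmonic.eq_of_coeff_eq [CharZero K] {p r : MvPolynomial (Fin 2) K}
    (hp : IsQHarmonic q p) (hr : IsQHarmonic q r) (h0 : coeff 0 p = coeff 0 r)
    (h1 : coeff (Finsupp.single 0 1) p = coeff (Finsupp.single 0 1) r)
    (hcrit : ∀ m : ℕ, 2 ≤ m → 2 + q * m = 0 →
      coeff (Finsupp.single 1 m) p = coeff (Finsupp.single 1 m) r) :
    p = r := by
  have hpr : IsQHarmonic q (p - r) :=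
    mem_qHarmonics.1 (sub_mem (mem_qHarmonics.2 hp) (mem_qHarmonics.2 hr))
  have hu := hpr.isQHarmonicCoeffs_scaledCoeff.eq_zero (by simp [scaledCoeff, h0])
    (by simp [scaledCoeff, h1]) (fun m hm hc => by simp [scaledCoeff, hcrit m hm hc])
  rw [← sub_eq_zero]
  ext m
  have hm : Finsupp.single 0 (m 0) + Finsupp.single 1 (m 1) = m := by
    ext i; fin_cases i <;> simp
  simpa [scaledCoeff, hm, Nat.factorial_ne_zero] using congrFun₂ hu (m 0) (m 1)

end TwoVariables

section SumOfVariables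

variable {R : Type*} [CommSemiring R]

theorem pderiv_iterate_X_add_X_pow (i : Fin 2) (k N : ℕ) :
    (pderiv i)^[k] ((X 0 + X 1 : MvPolynomial (Fin 2) R) ^ N) =
      N.descFactorial k • (X 0 + X 1) ^ (N - k) := by
  have hs : pderiv i (X 0 + X 1 : MvPolynomial (Fin 2) R) = 1 := by fin_cases i <;> simp
  induction k with
  | zero => simp
  | succ k ih =>
    rw [Function.iterate_succ_apply', ih, map_nsmul, pderiv_pow, hs, Nat.descFactorial_succ,
      Nat.sub_sub]
    simp only [nsmul_eq_mul, Nat.cast_mul]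
    ring

theorem coeff_single_X_add_X_pow (N : ℕ) :
    coeff (Finsupp.single 1 N) ((X 0 + X 1 : MvPolynomial (Fin 2) R) ^ N) = 1 := by
  induction N with
  | zero => simp
  | succ N ih =>
    rw [pow_succ', add_mul, coeff_add, coeff_single_X_mul_of_ne Fin.zero_ne_one,
      coeff_single_succ_X_mul, ih, zero_add]

end SumOfVariables

section CriticalPolynomial

theorem coeff_single_X_sub_X_mul_X_add_X_pow {R : Type*} [CommRing R] (e : ℕ) :
    coeff (Finsupp.single 1 (e + 1)) ((X 0 - X 1) * (X 0 + X 1) ^ e : MvPolynomial (Fin 2) R) =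
      -1 := by
  rw [sub_mul, coeff_sub, coeff_single_X_mul_of_ne Fin.zero_ne_one, coeff_single_succ_X_mul,
    coeff_single_X_add_X_pow, zero_sub]

theorem isHomogeneous_X_sub_X_mul_X_add_X_pow {R : Type*} [CommRing R] (e : ℕ) :
    ((X 0 - X 1) * (X 0 + X 1) ^ e : MvPolynomial (Fin 2) R).IsHomogeneous (e + 1) := by
  have h := ((isHomogeneous_X R (0 : Fin 2)).sub (isHomogeneous_X R 1)).mul
    (((isHomogeneous_X R 0).add (isHomogeneous_X R 1)).pow e)
  rwa [one_mul, add_comm 1 e] at h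

theorem isQHarmonic_X_sub_X_mul_X_add_X_pow {K : Type} [Field K] {q : K} {e : ℕ}
    (hq : 2 + q * (e + 1) = 0) :
    IsQHarmonic q ((X 0 - X 1) * (X 0 + X 1) ^ e : MvPolynomial (Fin 2) K) := by
  set s : MvPolynomial (Fin 2) K := X 0 + X 1
  have hd0 (j : ℕ) : (pderiv 0)^[j] ((X 0 - X 1) * s ^ e) =
      (e + 1).descFactorial j • s ^ (e + 1 - j) - X 1 * (e.descFactorial j • s ^ (e - j))
        - X 1 * (e.descFactorial j • s ^ (e - j)) := by
    rw [show (X 0 - X 1) * s ^ e = s ^ (e + 1) - X 1 * s ^ e - X 1 * s ^ e by ring,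
      iterate_map_sub, iterate_map_sub, pderiv_iterate_X_mul_of_ne (by decide),
      pderiv_iterate_X_add_X_pow, pderiv_iterate_X_add_X_pow]
  have hd1 (j : ℕ) : (pderiv 1)^[j] ((X 0 - X 1) * s ^ e) =
      X 0 * (e.descFactorial j • s ^ (e - j)) + X 0 * (e.descFactorial j • s ^ (e - j))
        - (e + 1).descFactorial j • s ^ (e + 1 - j) := by
    rw [show (X 0 - X 1) * s ^ e = X 0 * s ^ e + X 0 * s ^ e - s ^ (e + 1) by ring,
      iterate_map_sub, iterate_map_add, pderiv_iterate_X_mul_of_ne (by decide),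
      pderiv_iterate_X_add_X_pow, pderiv_iterate_X_add_X_pow]
  have hC : 2 + C q * ((e : MvPolynomial (Fin 2) K) + 1) = 0 := by
    simpa [map_ofNat] using congrArg C hq
  intro k _
  rw [steenrodPdual_apply_s18, Fin.sum_univ_two, hd0, hd0, hd1, hd1, Nat.succ_descFactorial_succ,
    Nat.add_sub_add_right]
  simp only [smul_eq_C_mul, nsmul_eq_mul]
  push_cast
  linear_combination (e.descFactorial k * (X 0 - X 1) * s ^ (e - k)) * hC

end CriticalPolynomial

section Classification

variable {K : Type} [Field K] [CharZero K] {q : K}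

theorem setOf_isQHarmonic_eq_span_of_forall_ne (hq : ∀ m : ℕ, 2 ≤ m → 2 + q * m ≠ 0) :
    {p : MvPolynomial (Fin 2) K | IsQHarmonic q p} =
      ↑(Submodule.span K ({1, X 0 - X 1} : Set (MvPolynomial (Fin 2) K))) := by
  have hS : ∀ g ∈ ({1, X 0 - X 1} : Set (MvPolynomial (Fin 2) K)), IsQHarmonic q g := by
    simp [isQHarmonic_one, isQHarmonic_X_sub_X]
  refine setOf_isQHarmonic_eq_span hS fun p hp => ?_
  have hmem : coeff 0 p • 1 + coeff (Finsupp.single 0 1) p • (X 0 - X 1) ∈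
      Submodule.span K ({1, X 0 - X 1} : Set (MvPolynomial (Fin 2) K)) :=
    add_mem (Submodule.smul_mem _ _ (Submodule.subset_span (by simp)))
      (Submodule.smul_mem _ _ (Submodule.subset_span (by simp)))
  convert hmem
  exact hp.eq_of_coeff_eq (mem_qHarmonics.1 (span_le_qHarmonics hS hmem)) (by simp)
    (by simp [coeff_one, eq_comm (a := (0 : Fin 2 →₀ ℕ))])
    fun m hm hc => absurd hc (hq m hm)

theorem setOf_isQHarmonic_eq_span_of_eq {e : ℕ} (he : 1 ≤ e) (hq : 2 + q * (e + 1) = 0) :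
    {p : MvPolynomial (Fin 2) K | IsQHarmonic q p} =
      ↑(Submodule.span K
        ({1, X 0 - X 1, (X 0 - X 1) * (X 0 + X 1) ^ e} : Set (MvPolynomial (Fin 2) K))) := by
  set S : Set (MvPolynomial (Fin 2) K) := {1, X 0 - X 1, (X 0 - X 1) * (X 0 + X 1) ^ e}
  have hS : ∀ g ∈ S, IsQHarmonic q g := by
    simp [S, isQHarmonic_one, isQHarmonic_X_sub_X, isQHarmonic_X_sub_X_mul_X_add_X_pow hq]
  refine setOf_isQHarmonic_eq_span hS fun p hp => ?_
  have hmem : coeff 0 p • 1 + coeff (Finsupp.single 0 1) p • (X 0 - X 1)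
      - coeff (Finsupp.single 1 (e + 1)) p • ((X 0 - X 1) * (X 0 + X 1) ^ e) ∈
      Submodule.span K S :=
    sub_mem (add_mem (Submodule.smul_mem _ _ (Submodule.subset_span (by simp [S])))
      (Submodule.smul_mem _ _ (Submodule.subset_span (by simp [S]))))
      (Submodule.smul_mem _ _ (Submodule.subset_span (by simp [S])))
  have hw := isHomogeneous_X_sub_X_mul_X_add_X_pow (R := K) e
  have hcrit (m : ℕ) (hm : 2 + q * m = 0) : m = e + 1 := by
    have hq0 : q ≠ 0 := by rintro rfl; norm_num at hq
    have h : (m : K) = e + 1 := mul_left_cancel₀ hq0 (by linear_combination hm - hq)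
    exact_mod_cast h
  convert hmem
  refine hp.eq_of_coeff_eq (mem_qHarmonics.1 (span_le_qHarmonics hS hmem)) ?_ ?_ ?_
  · simp [hw.coeff_eq_zero (d := 0) (by simp)]
  · simp [coeff_one, eq_comm (a := (0 : Fin 2 →₀ ℕ)),
      hw.coeff_eq_zero (d := Finsupp.single 0 1) (by simp; omega)]
  · rintro m hm hc
    obtain rfl := hcrit m hc
    simp only [coeff_sub, coeff_add, coeff_smul, smul_eq_mul,
      coeff_single_X_sub_X_mul_X_add_X_pow]
    simp [coeff_one, coeff_X, eq_comm (a := (0 : Fin 2 →₀ ℕ)), Finsupp.single_eq_single_iff,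
      -Finsupp.single_add, Nat.one_le_iff_ne_zero.1 he]

end Classification

/-- The `q_0`-harmonics in `ℂ[x,y]` are spanned by `1` and `x − y`
when `q_0` is not of the form `−2/d` for an integer `d ≥ 2`, and by `1`, `x − y` and
`(x − y)(x + y)^{d−1}` when `q_0 = −2/d` with `d ≥ 2`. -/
theorem qHarmonic_two_vars_classification (q0 : ℂ) :
    ((∀ d : ℕ, 2 ≤ d → q0 ≠ -2 / (d : ℂ)) →
      {p : MvPolynomial (Fin 2) ℂ | IsQHarmonic q0 p}
        = ↑(Submodule.span ℂ
            ({1, X 0 - X 1} : Set (MvPolynomial (Fin 2) ℂ)))) ∧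
    (∀ d : ℕ, 2 ≤ d → q0 = -2 / (d : ℂ) →
      {p : MvPolynomial (Fin 2) ℂ | IsQHarmonic q0 p}
        = ↑(Submodule.span ℂ
            ({1, X 0 - X 1, (X 0 - X 1) * (X 0 + X 1) ^ (d - 1)} :
              Set (MvPolynomial (Fin 2) ℂ)))) := by
  refine ⟨fun hq => setOf_isQHarmonic_eq_span_of_forall_ne fun m hm h => hq m hm ?_,
    fun d hd hqd => ?_⟩
  · have hm0 : (m : ℂ) ≠ 0 := by exact_mod_cast (by omega : m ≠ 0)
    field_simp
    linear_combination h
  · obtain ⟨e, rfl⟩ := Nat.exists_eq_add_of_le' (by omega : 1 ≤ d)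
    have he : (e + 1 : ℂ) ≠ 0 := by exact_mod_cast Nat.succ_ne_zero e
    rw [Nat.add_sub_cancel]
    refine setOf_isQHarmonic_eq_span_of_eq (by omega) ?_
    rw [hqd]
    push_cast
    field_simp
    ring
end
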